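/- arXiv:1706.00850 — 3 statements merged into one kernel-verified Lean document; each statement's English description precedes it below -/
import Mathlib

section
/- Fix an integer r ≥ 1 and a real m > 1. As Ξ → ∞, the integral ∫ over the region {x₁^{(m-1)/m} x₂⋯x_r ≤ Ξ, all x_k ≥ 1} of x₁²/(x₁²+x₂²+⋯+x_r²) dx₁⋯dx_r is bounded above and below by positive constant multiples of Ξ^{m/(m-1)}. -/
/-! Put `α = (m-1)/m` and `β = 1/α = m/(m-1)`; on the region `x₁ ≤ Ξ^β`. The integrand lies in
`(0, 1]`, so the upper bound reduces to `vol(region) = O(Ξ^β)`, which follows from Rankin's trick: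
for `1 < q < β` the indicator of the region is at most `(Ξ / (x₁^α x₂⋯x_r))^q` restricted to
`x₁ ≤ Ξ^β`, a product of one-variable functions whose integrals are
`Ξ^q ∫₁^{Ξ^β} t^{-αq} dt = O(Ξ^β)` and `∫₁^∞ t^{-q} dt = 1/(q-1)`. For the lower bound, the region
contains the box `[1, (Ξ/2^{r-1})^β] × [1,2]^{r-1}`, of volume `≍ Ξ^β`, on which every `x_k ≤ 2x₁`,
so the integrand is at least `1/(4r)`. -/

open MeasureTheory Set

section

variable {ι : Type*} [Fintype ι]

theorem volume_le_ofReal_prod_integral {S : Set (ι → ℝ)}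
    {g : ι → ℝ → ℝ} (hg_nonneg : ∀ i t, 0 ≤ g i t) (hg : ∀ i, Integrable (g i))
    (hS : ∀ x ∈ S, 1 ≤ ∏ i, g i (x i)) :
    volume S ≤ ENNReal.ofReal (∏ i, ∫ t, g i t) := by
  have hG : Integrable fun x : ι → ℝ => ∏ i, g i (x i) := Integrable.fintype_prod hg
  calc volume S ≤ volume {x : ι → ℝ | 1 ≤ ENNReal.ofReal (∏ i, g i (x i))} :=
        measure_mono fun x hx => ENNReal.one_le_ofReal.2 (hS x hx)
    _ ≤ ∫⁻ x : ι → ℝ, ENNReal.ofReal (∏ i, g i (x i)) := by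
        simpa only [one_mul] using mul_meas_ge_le_lintegral₀ hG.aemeasurable.ennreal_ofReal 1
    _ = ENNReal.ofReal (∏ i, ∫ t, g i t) := by
        rw [← ofReal_integral_eq_lintegral_ofReal hG
          (ae_of_all _ fun x => Finset.prod_nonneg fun i _ => hg_nonneg i _),
          integral_fintype_prod_volume_eq_prod]

theorem sq_div_sum_sq_nonneg (i₀ : ι) (x : ι → ℝ) : 0 ≤ x i₀ ^ 2 / ∑ k, x k ^ 2 := by
  positivity

theorem sq_div_sum_sq_le_one (i₀ : ι) (x : ι → ℝ) : x i₀ ^ 2 / ∑ k, x k ^ 2 ≤ 1 :=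
  div_le_one_of_le₀ (Finset.single_le_sum (fun k _ => sq_nonneg (x k)) (Finset.mem_univ i₀))
    (by positivity)

theorem inv_mul_card_le_sq_div_sum_sq {i₀ : ι} {x : ι → ℝ} {c : ℝ} (hx : 0 < x i₀)
    (hc : ∀ k, x k ^ 2 ≤ c * x i₀ ^ 2) :
    (c * Fintype.card ι)⁻¹ ≤ x i₀ ^ 2 / ∑ k, x k ^ 2 := by
  have hsum : ∑ k, x k ^ 2 ≤ c * Fintype.card ι * x i₀ ^ 2 :=
    calc ∑ k, x k ^ 2 ≤ ∑ _k : ι, c * x i₀ ^ 2 := Finset.sum_le_sum fun k _ => hc k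
      _ = c * Fintype.card ι * x i₀ ^ 2 := by
        rw [Finset.sum_const, Finset.card_univ, nsmul_eq_mul]; ring
  have hpos : 0 < ∑ k, x k ^ 2 := (pow_pos hx 2).trans_le
    (Finset.single_le_sum (fun k _ => sq_nonneg (x k)) (Finset.mem_univ i₀))
  have hcn : 0 < c * Fintype.card ι := pos_of_mul_pos_left (hpos.trans_le hsum) (sq_nonneg _)
  rw [le_div_iff₀ hpos, inv_mul_le_iff₀ hcn]
  linarith

end

theorem exists_one_lt_mul_lt_one {α : ℝ} (hα : 0 < α) (hα₁ : α < 1) :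
    ∃ q, 1 < q ∧ α * q < 1 := by
  obtain ⟨q, hq, hqα⟩ := exists_between ((one_lt_inv₀ hα).2 hα₁)
  exact ⟨q, hq, (lt_inv_mul_iff₀ hα).1 (by simpa using hqα)⟩

theorem integrableOn_Ici_one_rpow_neg {q : ℝ} (hq : 1 < q) :
    IntegrableOn (fun t : ℝ => t ^ (-q)) (Ici 1) :=
  (integrableOn_Ici_iff_integrableOn_Ioi (by simp)).2
    (integrableOn_Ioi_rpow_of_lt (by linarith) one_pos)

theorem integral_Ici_one_rpow_neg {q : ℝ} (hq : 1 < q) :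
    ∫ t in Ici (1 : ℝ), t ^ (-q) = (q - 1)⁻¹ := by
  rw [integral_Ici_eq_integral_Ioi, integral_Ioi_rpow_of_lt (by linarith) one_pos, Real.one_rpow,
    neg_div, ← div_neg, neg_add, neg_neg, ← sub_eq_add_neg, one_div]

theorem integrableOn_Icc_one_rpow {a T : ℝ} : IntegrableOn (fun t : ℝ => t ^ a) (Icc 1 T) :=
  (continuousOn_id.rpow_const fun _ ht => Or.inl (zero_lt_one.trans_le ht.1).ne').integrableOn_Icc

theorem integral_Icc_one_rpow_neg_le {p T : ℝ} (hp : p < 1) (hT : 1 ≤ T) :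
    ∫ t in Icc 1 T, t ^ (-p) ≤ T ^ (1 - p) / (1 - p) := by
  rw [integral_Icc_eq_integral_Ioc, ← intervalIntegral.integral_of_le hT,
    integral_rpow (Or.inl (by linarith)), neg_add_eq_sub, Real.one_rpow]
  gcongr
  linarith

section

variable {ι : Type*} [DecidableEq ι]

noncomputable def rankinFactor (i₀ : ι) (α q Ξ : ℝ) (i : ι) : ℝ → ℝ :=
  if i = i₀ then (Icc 1 (Ξ ^ α⁻¹)).indicator fun t => Ξ ^ q * t ^ (-(α * q))
  else (Ici 1).indicator fun t => t ^ (-q)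

theorem rankinFactor_nonneg {i₀ : ι} {α q Ξ : ℝ} (hΞ : 0 ≤ Ξ) (i : ι) (t : ℝ) :
    0 ≤ rankinFactor i₀ α q Ξ i t := by
  unfold rankinFactor
  split_ifs
  · exact indicator_nonneg (fun t ht => by have := ht.1; positivity) t
  · exact indicator_nonneg (fun t ht => by have : (1 : ℝ) ≤ t := ht; positivity) t

theorem integrable_rankinFactor {i₀ : ι} {α q Ξ : ℝ} (hq : 1 < q) (i : ι) :
    Integrable (rankinFactor i₀ α q Ξ i) := by
  unfold rankinFactor
  split_ifs
  · exact (integrable_indicator_iff measurableSet_Icc).2 (integrableOn_Icc_one_rpow.const_mul _)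
  · exact (integrable_indicator_iff measurableSet_Ici).2 (integrableOn_Ici_one_rpow_neg hq)

theorem integral_rankinFactor_self_le {i₀ : ι} {α q Ξ : ℝ} (hα : 0 < α) (hαq : α * q < 1)
    (hΞ : 1 ≤ Ξ) : ∫ t, rankinFactor i₀ α q Ξ i₀ t ≤ (1 - α * q)⁻¹ * Ξ ^ α⁻¹ := by
  have hΞ₀ : 0 < Ξ := zero_lt_one.trans_le hΞ
  simp only [rankinFactor, if_pos, integral_indicator measurableSet_Icc, integral_const_mul]
  calc Ξ ^ q * ∫ t in Icc 1 (Ξ ^ α⁻¹), t ^ (-(α * q))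
      ≤ Ξ ^ q * ((Ξ ^ α⁻¹) ^ (1 - α * q) / (1 - α * q)) := by
        gcongr
        exact integral_Icc_one_rpow_neg_le hαq (Real.one_le_rpow hΞ (by positivity))
    _ = (1 - α * q)⁻¹ * Ξ ^ α⁻¹ := by
        rw [← Real.rpow_mul hΞ₀.le, mul_div, ← Real.rpow_add hΞ₀, div_eq_inv_mul]
        congr 2
        field_simp
        ring

theorem integral_rankinFactor_of_ne {i₀ i : ι} {α q Ξ : ℝ} (hi : i ≠ i₀) (hq : 1 < q) :
    ∫ t, rankinFactor i₀ α q Ξ i t = (q - 1)⁻¹ := by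
  simp only [rankinFactor, if_neg hi, integral_indicator measurableSet_Ici,
    integral_Ici_one_rpow_neg hq]

theorem bounds_of_mem_pi_update_Icc {i₀ : ι} {T : ℝ} {x : ι → ℝ}
    (hx : x ∈ univ.pi (Function.update (fun _ => Icc (1 : ℝ) 2) i₀ (Icc 1 T))) :
    (∀ k, 1 ≤ x k) ∧ x i₀ ≤ T ∧ ∀ k ≠ i₀, x k ≤ 2 := by
  obtain ⟨hx₀, hxk⟩ := (Function.forall_update_iff _ fun k s => x k ∈ s).1 (mem_univ_pi.1 hx)
  refine ⟨fun k => ?_, hx₀.2, fun k hk => (hxk k hk).2⟩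
  rcases eq_or_ne k i₀ with rfl | hk
  exacts [hx₀.1, (hxk k hk).1]

variable [Fintype ι]

theorem volume_pi_update_Icc (i₀ : ι) (T : ℝ) :
    volume (univ.pi (Function.update (fun _ => Icc (1 : ℝ) 2) i₀ (Icc 1 T))) =
      ENNReal.ofReal (T - 1) := by
  rw [volume_pi_pi]
  simp_rw [Function.apply_update (fun _ => (volume : Measure ℝ))]
  norm_num [Finset.prod_update_of_mem, Real.volume_Icc]

theorem inv_four_mul_card_le_sq_div_sum_sq_of_mem_pi_update_Icc {i₀ : ι} {T : ℝ} {x : ι → ℝ}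
    (hx : x ∈ univ.pi (Function.update (fun _ => Icc (1 : ℝ) 2) i₀ (Icc 1 T))) :
    (4 * (Fintype.card ι : ℝ))⁻¹ ≤ x i₀ ^ 2 / ∑ k, x k ^ 2 := by
  obtain ⟨hx1, -, hxk⟩ := bounds_of_mem_pi_update_Icc hx
  refine inv_mul_card_le_sq_div_sum_sq (zero_lt_one.trans_le (hx1 i₀)) fun k => ?_
  have : x k ≤ 2 * x i₀ := by
    rcases eq_or_ne k i₀ with rfl | hk
    · linarith [hx1 k]
    · linarith [hxk k hk, hx1 i₀]
  nlinarith [hx1 k]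

def weightedRegion (i₀ : ι) (α Ξ : ℝ) : Set (ι → ℝ) :=
  {x | (∀ k, 1 ≤ x k) ∧ x i₀ ^ α * ∏ k ∈ Finset.univ.erase i₀, x k ≤ Ξ}

theorem one_le_prod_erase_of_mem_weightedRegion {i₀ : ι} {α Ξ : ℝ} {x : ι → ℝ}
    (hx : x ∈ weightedRegion i₀ α Ξ) : 1 ≤ ∏ k ∈ Finset.univ.erase i₀, x k :=
  Finset.one_le_prod fun k _ => hx.1 k

theorem le_rpow_inv_of_mem_weightedRegion {i₀ : ι} {α Ξ : ℝ} {x : ι → ℝ} (hα : 0 < α)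
    (hx : x ∈ weightedRegion i₀ α Ξ) : x i₀ ≤ Ξ ^ α⁻¹ := by
  have hx₀ : 0 ≤ x i₀ := zero_le_one.trans (hx.1 i₀)
  have hpow : x i₀ ^ α ≤ Ξ :=
    le_mul_of_one_le_right (by positivity) (one_le_prod_erase_of_mem_weightedRegion hx)
      |>.trans hx.2
  calc x i₀ = (x i₀ ^ α) ^ α⁻¹ := by rw [← Real.rpow_mul hx₀, mul_inv_cancel₀ hα.ne', Real.rpow_one]
    _ ≤ Ξ ^ α⁻¹ := by gcongr

theorem one_le_prod_rankinFactor {i₀ : ι} {α q Ξ : ℝ} {x : ι → ℝ} (hα : 0 < α) (hq : 0 ≤ q)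
    (hx : x ∈ weightedRegion i₀ α Ξ) : 1 ≤ ∏ i, rankinFactor i₀ α q Ξ i (x i) := by
  have hx₀ : 0 < x i₀ := zero_lt_one.trans_le (hx.1 i₀)
  have hxk : ∀ k, 0 ≤ x k := fun k => zero_le_one.trans (hx.1 k)
  set P := ∏ k ∈ Finset.univ.erase i₀, x k
  have hP : 1 ≤ P := one_le_prod_erase_of_mem_weightedRegion hx
  have hprod : ∏ i, rankinFactor i₀ α q Ξ i (x i)
      = Ξ ^ q * (x i₀ ^ (α * q))⁻¹ * ∏ k ∈ Finset.univ.erase i₀, (x k ^ q)⁻¹ := by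
    rw [← Finset.mul_prod_erase Finset.univ _ (Finset.mem_univ i₀)]
    simp only [rankinFactor, if_pos, indicator_of_mem (mem_Icc.2 ⟨hx.1 i₀,
      le_rpow_inv_of_mem_weightedRegion hα hx⟩), Real.rpow_neg hx₀.le]
    congr 1
    refine Finset.prod_congr rfl fun k hk => ?_
    rw [if_neg (Finset.ne_of_mem_erase hk), indicator_of_mem (mem_Ici.2 (hx.1 k)),
      Real.rpow_neg (hxk k)]
  calc (1 : ℝ) ≤ (Ξ / (x i₀ ^ α * P)) ^ q :=
        Real.one_le_rpow ((one_le_div (by positivity)).2 hx.2) hq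
    _ = ∏ i, rankinFactor i₀ α q Ξ i (x i) := by
      have hΞ : 0 ≤ Ξ := (by positivity : (0 : ℝ) ≤ x i₀ ^ α * P).trans hx.2
      rw [hprod, Finset.prod_inv_distrib, Real.div_rpow hΞ (by positivity),
        Real.mul_rpow (by positivity) (by positivity), ← Real.rpow_mul hx₀.le,
        Real.finsetProd_rpow _ _ (fun k _ => hxk k), div_eq_mul_inv, mul_inv, mul_assoc]

theorem volume_weightedRegion_le (i₀ : ι) {α q Ξ : ℝ} (hα : 0 < α) (hq : 1 < q)
    (hαq : α * q < 1) (hΞ : 1 ≤ Ξ) :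
    volume (weightedRegion i₀ α Ξ) ≤
      ENNReal.ofReal ((1 - α * q)⁻¹ * (q - 1)⁻¹ ^ (Fintype.card ι - 1) * Ξ ^ α⁻¹) := by
  refine (volume_le_ofReal_prod_integral (rankinFactor_nonneg (by linarith))
    (integrable_rankinFactor hq) fun x hx => one_le_prod_rankinFactor hα (by linarith) hx).trans
    (ENNReal.ofReal_le_ofReal ?_)
  rw [← Finset.mul_prod_erase Finset.univ _ (Finset.mem_univ i₀),
    Finset.prod_congr rfl fun i hi => integral_rankinFactor_of_ne (Finset.ne_of_mem_erase hi) hq,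
    Finset.prod_const, Finset.card_erase_of_mem (Finset.mem_univ i₀), Finset.card_univ,
    mul_right_comm]
  have := sub_pos.2 hq
  gcongr
  exact integral_rankinFactor_self_le hα hαq hΞ

theorem setIntegral_sq_div_sum_sq_weightedRegion_le (i₀ : ι) {α q Ξ : ℝ} (hα : 0 < α)
    (hq : 1 < q) (hαq : α * q < 1) (hΞ : 1 ≤ Ξ) :
    ∫ x in weightedRegion i₀ α Ξ, x i₀ ^ 2 / ∑ k, x k ^ 2 ≤
      (1 - α * q)⁻¹ * (q - 1)⁻¹ ^ (Fintype.card ι - 1) * Ξ ^ α⁻¹ := by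
  have hvol := volume_weightedRegion_le i₀ hα hq hαq hΞ
  calc ∫ x in weightedRegion i₀ α Ξ, x i₀ ^ 2 / ∑ k, x k ^ 2
      ≤ 1 * volume.real (weightedRegion i₀ α Ξ) :=
        (le_abs_self _).trans <| norm_setIntegral_le_of_norm_le_const
          (hvol.trans_lt ENNReal.ofReal_lt_top) fun x _ => by
            rw [Real.norm_of_nonneg (sq_div_sum_sq_nonneg i₀ x)]
            exact sq_div_sum_sq_le_one i₀ x
    _ ≤ _ := by
        rw [one_mul, measureReal_def]
        have := sub_pos.2 hq
        have := sub_pos.2 hαq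
        exact ENNReal.toReal_le_of_le_ofReal (by positivity) hvol

theorem integrableOn_sq_div_sum_sq_weightedRegion (i₀ : ι) {α Ξ : ℝ} (hα : 0 < α) (hα₁ : α < 1)
    (hΞ : 1 ≤ Ξ) :
    IntegrableOn (fun x : ι → ℝ => x i₀ ^ 2 / ∑ k, x k ^ 2) (weightedRegion i₀ α Ξ) := by
  obtain ⟨q, hq, hαq⟩ := exists_one_lt_mul_lt_one hα hα₁
  have hmeas : Measurable fun x : ι → ℝ => x i₀ ^ 2 / ∑ k, x k ^ 2 := by fun_prop
  refine IntegrableOn.of_bound ((volume_weightedRegion_le i₀ hα hq hαq hΞ).trans_lt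
    ENNReal.ofReal_lt_top) hmeas.aestronglyMeasurable 1 (ae_of_all _ fun x => ?_)
  rw [Real.norm_of_nonneg (sq_div_sum_sq_nonneg i₀ x)]
  exact sq_div_sum_sq_le_one i₀ x

theorem pi_update_Icc_subset_weightedRegion (i₀ : ι) {α Ξ : ℝ} (hα : 0 < α) (hΞ : 0 ≤ Ξ) :
    univ.pi (Function.update (fun _ => Icc (1 : ℝ) 2) i₀
      (Icc 1 ((Ξ / 2 ^ (Fintype.card ι - 1)) ^ α⁻¹))) ⊆ weightedRegion i₀ α Ξ := by
  intro x hx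
  obtain ⟨hx1, hx₀, hxk⟩ := bounds_of_mem_pi_update_Icc hx
  have hA : (0 : ℝ) < 2 ^ (Fintype.card ι - 1) := by positivity
  have hpow : x i₀ ^ α ≤ Ξ / 2 ^ (Fintype.card ι - 1) :=
    calc x i₀ ^ α ≤ ((Ξ / 2 ^ (Fintype.card ι - 1)) ^ α⁻¹) ^ α := by
          gcongr
          exact zero_le_one.trans (hx1 i₀)
      _ = Ξ / 2 ^ (Fintype.card ι - 1) := by
          rw [← Real.rpow_mul (by positivity), inv_mul_cancel₀ hα.ne', Real.rpow_one]
  have hprod : ∏ k ∈ Finset.univ.erase i₀, x k ≤ 2 ^ (Fintype.card ι - 1) :=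
    calc ∏ k ∈ Finset.univ.erase i₀, x k ≤ ∏ _k ∈ Finset.univ.erase i₀, (2 : ℝ) :=
          Finset.prod_le_prod (fun k _ => zero_le_one.trans (hx1 k))
            fun k hk => hxk k (Finset.ne_of_mem_erase hk)
      _ = 2 ^ (Fintype.card ι - 1) := by
          rw [Finset.prod_const, Finset.card_erase_of_mem (Finset.mem_univ i₀), Finset.card_univ]
  refine ⟨hx1, ?_⟩
  calc x i₀ ^ α * ∏ k ∈ Finset.univ.erase i₀, x k
      ≤ Ξ / 2 ^ (Fintype.card ι - 1) * 2 ^ (Fintype.card ι - 1) :=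
        mul_le_mul hpow hprod (Finset.prod_nonneg fun k _ => zero_le_one.trans (hx1 k))
          (by positivity)
    _ = Ξ := div_mul_cancel₀ _ hA.ne'

theorem le_setIntegral_sq_div_sum_sq_weightedRegion (i₀ : ι) {α Ξ : ℝ} (hα : 0 < α)
    (hα₁ : α < 1) (hΞ : (2 : ℝ) ^ Fintype.card ι ≤ Ξ) :
    (8 * Fintype.card ι * ((2 : ℝ) ^ (Fintype.card ι - 1)) ^ α⁻¹)⁻¹ * Ξ ^ α⁻¹ ≤
      ∫ x in weightedRegion i₀ α Ξ, x i₀ ^ 2 / ∑ k, x k ^ 2 := by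
  set n := Fintype.card ι
  set A : ℝ := 2 ^ (n - 1)
  set T := (Ξ / A) ^ α⁻¹
  set B := univ.pi (Function.update (fun _ => Icc (1 : ℝ) 2) i₀ (Icc 1 T))
  have hn : 0 < n := Fintype.card_pos_iff.2 ⟨i₀⟩
  have hA : 0 < A := by positivity
  have hΞ₁ : 1 ≤ Ξ := (one_le_pow₀ one_le_two).trans hΞ
  have hAΞ : 2 ≤ Ξ / A := by
    rw [le_div_iff₀ hA, ← pow_succ', Nat.sub_add_cancel hn]
    exact hΞ
  have hT : 2 ≤ T :=
    hAΞ.trans (Real.self_le_rpow_of_one_le (by linarith) ((one_le_inv₀ hα).2 hα₁.le))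
  have hS := integrableOn_sq_div_sum_sq_weightedRegion i₀ hα hα₁ hΞ₁
  have hBS : B ⊆ weightedRegion i₀ α Ξ := pi_update_Icc_subset_weightedRegion i₀ hα (by linarith)
  calc (8 * (n : ℝ) * A ^ α⁻¹)⁻¹ * Ξ ^ α⁻¹ = (8 * (n : ℝ))⁻¹ * T := by
        rw [show T = Ξ ^ α⁻¹ / A ^ α⁻¹ from Real.div_rpow (by linarith) hA.le _]
        ring
    _ ≤ (4 * (n : ℝ))⁻¹ * (T - 1) := by
        have : (0 : ℝ) < n := by exact_mod_cast hn
        rw [← div_eq_inv_mul, ← div_eq_inv_mul, div_le_div_iff₀ (by positivity) (by positivity)]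
        nlinarith
    _ = (4 * (n : ℝ))⁻¹ * volume.real B := by
        rw [measureReal_def, volume_pi_update_Icc, ENNReal.toReal_ofReal (by linarith)]
    _ ≤ ∫ x in B, x i₀ ^ 2 / ∑ k, x k ^ 2 :=
        setIntegral_ge_of_const_le_real (MeasurableSet.univ_pi fun i => by
          rw [Function.update_apply]; split_ifs <;> exact measurableSet_Icc)
          (by simp [B, volume_pi_update_Icc])
          (fun x => inv_four_mul_card_le_sq_div_sum_sq_of_mem_pi_update_Icc) (hS.mono_set hBS)
    _ ≤ ∫ x in weightedRegion i₀ α Ξ, x i₀ ^ 2 / ∑ k, x k ^ 2 :=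
        setIntegral_mono_set hS (ae_of_all _ fun x => sq_div_sum_sq_nonneg i₀ x) hBS.eventuallyLE

end

/-- For `r ≥ 1` and `m > 1`, the integral of `x₁²/(x₁²+⋯+x_r²)` over
`{x ∈ [1,∞)^r : x₁^{(m-1)/m} x₂⋯x_r ≤ Ξ}` is `≍ Ξ^{m/(m-1)}` as `Ξ → ∞`. -/
theorem integral_weighted_region_asymp (r : ℕ) (hr : 0 < r) (m : ℝ) (hm : 1 < m) :
    ∃ c C Ξ₀ : ℝ, 0 < c ∧ c ≤ C ∧ 0 < Ξ₀ ∧ ∀ Ξ : ℝ, Ξ₀ ≤ Ξ →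
      c * Ξ ^ (m / (m - 1)) ≤
        (∫ x : Fin r → ℝ in
          {x | (∀ k, 1 ≤ x k) ∧
            (x ⟨0, hr⟩) ^ ((m - 1) / m) * ∏ k ∈ Finset.univ.erase ⟨0, hr⟩, x k ≤ Ξ},
          (x ⟨0, hr⟩) ^ 2 / (∑ k, (x k) ^ 2)) ∧
      (∫ x : Fin r → ℝ in
          {x | (∀ k, 1 ≤ x k) ∧
            (x ⟨0, hr⟩) ^ ((m - 1) / m) * ∏ k ∈ Finset.univ.erase ⟨0, hr⟩, x k ≤ Ξ},
          (x ⟨0, hr⟩) ^ 2 / (∑ k, (x k) ^ 2)) ≤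
        C * Ξ ^ (m / (m - 1)) := by
  set i₀ : Fin r := ⟨0, hr⟩
  set α := (m - 1) / m
  have hα : 0 < α := div_pos (by linarith) (by linarith)
  have hα₁ : α < 1 := (div_lt_one (by linarith)).2 (by linarith)
  obtain ⟨q, hq, hαq⟩ := exists_one_lt_mul_lt_one hα hα₁
  have hlower (Ξ : ℝ) (hΞ : (2 : ℝ) ^ Fintype.card (Fin r) ≤ Ξ) :=
    le_setIntegral_sq_div_sum_sq_weightedRegion i₀ hα hα₁ hΞ
  have hupper (Ξ : ℝ) (hΞ : (2 : ℝ) ^ Fintype.card (Fin r) ≤ Ξ) :=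
    setIntegral_sq_div_sum_sq_weightedRegion_le i₀ hα hq hαq
      ((one_le_pow₀ one_le_two).trans hΞ)
  rw [show m / (m - 1) = α⁻¹ from (inv_div _ _).symm]
  refine ⟨_, _, _, ?_, ?_, by positivity, fun Ξ hΞ => ⟨hlower Ξ hΞ, hupper Ξ hΞ⟩⟩
  · have : (0 : ℝ) < r := by exact_mod_cast hr
    simp only [Fintype.card_fin]
    positivity
  · exact le_of_mul_le_mul_right ((hlower _ le_rfl).trans (hupper _ le_rfl)) (by positivity)
end

section
/- Fix an integer r ≥ 3, reals β ≥ 0 and 0 < α ≤ 2. As Ξ → ∞, the integral of (∏_{k=1}^r x_k^β) · (x₁^α + x₂^α + ⋯ + x_r^α)^{-1} over the region {x₁⋯x_r ≤ Ξ, all x_k ≥ 1} is bounded above and below by positive constant multiples of Ξ^{β+1-α/r}. -/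
/-!
Split the region according to which coordinate `x_j` is the largest. There
`∑ x_k ^ α ≥ x_j ^ α` and every other coordinate lies in `(0, x_j]`, so those coordinates
integrate out independently and leave a one-dimensional integral in `t = x_j`.
Put `ℓ = Ξ ^ (1/r)`. For `t ≤ ℓ` the constraint `∏ x_k ≤ Ξ` is simply dropped, which
gives `∫₀^ℓ t ^ (r(β+1) - α - 1) dt ≍ ℓ ^ (r(β+1) - α)` since `r(β+1) > α`. For `t > ℓ`
the constraint is traded for the factor `(Ξ / ∏ x_k) ^ η` with `η = β + 1 - α/(2r)`
(Rankin's trick); this makes the `t`-integral converge at infinity, with the same order of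
magnitude.
For the lower bound, the cube `[ℓ/2, ℓ]^r` lies in the region and the integrand is
`≍ ℓ ^ (rβ - α)` on it.
-/

open MeasureTheory Set
open scoped ENNReal

section Fubini

variable {E : Type*} [MeasureSpace E] [SigmaFinite (volume : Measure E)]

theorem lintegral_eq_lintegral_insertNth {n : ℕ} (j : Fin (n + 1))
    {F : (Fin (n + 1) → E) → ℝ≥0∞} (hF : Measurable F) :
    ∫⁻ x, F x = ∫⁻ t, ∫⁻ z, F (j.insertNth t z) := by
  rw [← (volume_preserving_piFinSuccAbove (fun _ => E) j).symm.lintegral_comp hF,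
    Measure.volume_eq_prod]
  exact lintegral_prod _ (hF.comp (MeasurableEquiv.measurable _)).aemeasurable

theorem lintegral_fin_prod_eq_pow {g : E → ℝ≥0∞} (hg : Measurable g) (n : ℕ) :
    ∫⁻ z : Fin n → E, ∏ i, g (z i) = (∫⁻ s, g s) ^ n := by
  induction n with
  | zero => simp [volume_pi]
  | succ n ih =>
    rw [lintegral_eq_lintegral_insertNth 0 (by fun_prop)]
    simp_rw [Fin.prod_univ_succ, Fin.insertNth_zero', Fin.cons_zero, Fin.cons_succ]
    have inner (t : E) :
        ∫⁻ z : Fin n → E, g t * ∏ i, g (z i) = g t * (∫⁻ s, g s) ^ n := by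
      rw [lintegral_const_mul _ (by fun_prop), ih]
    simp_rw [inner]
    rw [lintegral_mul_const _ hg, pow_succ']

end Fubini

theorem lintegral_Ioc_rpow {e : ℝ} (he : -1 < e) {t : ℝ} (ht : 0 ≤ t) :
    ∫⁻ s in Ioc 0 t, ENNReal.ofReal (s ^ e) = ENNReal.ofReal (t ^ (e + 1) / (e + 1)) := by
  have hint : IntegrableOn (fun s : ℝ => s ^ e) (Ioc 0 t) := by
    simpa [intervalIntegrable_iff, uIoc_of_le ht] using
      intervalIntegral.intervalIntegrable_rpow' he (a := 0) (b := t)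
  rw [← ofReal_integral_eq_lintegral_ofReal hint
      (ae_restrict_of_forall_mem measurableSet_Ioc fun s hs => Real.rpow_nonneg hs.1.le e),
    ← intervalIntegral.integral_of_le ht, integral_rpow (Or.inl he),
    Real.zero_rpow (by linarith), sub_zero]

theorem lintegral_Ioi_rpow {a : ℝ} (ha : a < -1) {c : ℝ} (hc : 0 < c) :
    ∫⁻ s in Ioi c, ENNReal.ofReal (s ^ a) = ENNReal.ofReal (-c ^ (a + 1) / (a + 1)) := by
  rw [← ofReal_integral_eq_lintegral_ofReal (integrableOn_Ioi_rpow_of_lt ha hc)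
      (ae_restrict_of_forall_mem measurableSet_Ioi fun s hs => Real.rpow_nonneg (hc.trans hs).le a),
    integral_Ioi_rpow_of_lt ha hc]

section MaxSlice

variable {n : ℕ} (j : Fin (n + 1))

/-- `x_j ^ a * ∏ k, x_k ^ e` on the cone `{x | ∀ k, 0 < x k ≤ x j}`, cut down to `x j ∈ T`.
The product form lets the coordinates `k ≠ j` be integrated out one at a time. -/
noncomputable def maxSliceWeight (T : Set ℝ) (a e : ℝ) (x : Fin (n + 1) → ℝ) : ℝ≥0∞ :=
  T.indicator (fun t => ENNReal.ofReal (t ^ a)) (x j) *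
    ∏ k, (Ioc 0 (x j)).indicator (fun s => ENNReal.ofReal (s ^ e)) (x k)

theorem measurable_maxSliceWeight {T : Set ℝ} (hT : MeasurableSet T) (a e : ℝ) :
    Measurable (maxSliceWeight j T a e) := by
  unfold maxSliceWeight
  refine (((Measurable.ennreal_ofReal (by fun_prop)).indicator hT).comp (measurable_pi_apply j)).mul
    (Finset.measurable_prod _ fun k _ => ?_)
  simp only [indicator, mem_Ioc]
  exact Measurable.ite ((measurableSet_lt measurable_const (measurable_pi_apply k)).inter
    (measurableSet_le (measurable_pi_apply k) (measurable_pi_apply j))) (by fun_prop)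
    measurable_const

theorem lintegral_maxSliceWeight_eq_setLIntegral {T : Set ℝ} (hT : MeasurableSet T)
    (hT0 : T ⊆ Ioi 0) (a : ℝ) {e : ℝ} (he : -1 < e) :
    ∫⁻ x, maxSliceWeight j T a e x =
      ∫⁻ t in T, ENNReal.ofReal (t ^ a) * ENNReal.ofReal (t ^ e) *
        ENNReal.ofReal (t ^ (e + 1) / (e + 1)) ^ n := by
  rw [lintegral_eq_lintegral_insertNth j (measurable_maxSliceWeight j hT a e),
    ← lintegral_indicator hT]
  refine lintegral_congr fun t => ?_
  simp only [maxSliceWeight, Fin.prod_univ_succAbove _ j, Fin.insertNth_apply_same,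
    Fin.insertNth_apply_succAbove]
  by_cases ht : t ∈ T
  · have hg : Measurable ((Ioc 0 t).indicator fun s : ℝ => ENNReal.ofReal (s ^ e)) :=
      (Measurable.ennreal_ofReal (by fun_prop)).indicator measurableSet_Ioc
    simp_rw [← mul_assoc]
    rw [lintegral_const_mul _ (by fun_prop), lintegral_fin_prod_eq_pow hg,
      lintegral_indicator measurableSet_Ioc, lintegral_Ioc_rpow he (hT0 ht).le,
      indicator_of_mem ht, indicator_of_mem ht,
      indicator_of_mem (show t ∈ Ioc 0 t from ⟨hT0 ht, le_rfl⟩)]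
  · simp [indicator_of_notMem ht]

theorem lintegral_maxSliceWeight {T : Set ℝ} (hT : MeasurableSet T)
    (hT0 : T ⊆ Ioi 0) (a : ℝ) {e : ℝ} (he : -1 < e) :
    ∫⁻ x, maxSliceWeight j T a e x = ENNReal.ofReal ((e + 1) ^ n)⁻¹ *
      ∫⁻ t in T, ENNReal.ofReal (t ^ ((n + 1) * (e + 1) + a - 1)) := by
  rw [lintegral_maxSliceWeight_eq_setLIntegral j hT hT0 a he,
    ← lintegral_const_mul _ (by fun_prop)]
  refine setLIntegral_congr_fun hT fun t ht => ?_
  have ht0 : 0 < t := hT0 ht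
  have he1 : 0 < e + 1 := by linarith
  rw [← ENNReal.ofReal_pow (by positivity), ← ENNReal.ofReal_mul (by positivity),
    ← ENNReal.ofReal_mul (by positivity), ← ENNReal.ofReal_mul (by positivity)]
  congr 1
  rw [div_pow, ← Real.rpow_mul_natCast ht0.le,
    show (n + 1) * (e + 1) + a - 1 = a + e + (e + 1) * n by ring, Real.rpow_add ht0,
    Real.rpow_add ht0]
  field_simp

theorem lintegral_maxSliceWeight_Ioc {a e ℓ : ℝ} (he : -1 < e)
    (hp : 0 < (n + 1) * (e + 1) + a) (hℓ : 0 ≤ ℓ) :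
    ∫⁻ x, maxSliceWeight j (Ioc 0 ℓ) a e x = ENNReal.ofReal
      (((e + 1) ^ n)⁻¹ / ((n + 1) * (e + 1) + a) * ℓ ^ ((n + 1) * (e + 1) + a)) := by
  rw [lintegral_maxSliceWeight j measurableSet_Ioc (fun t ht => ht.1) a he,
    lintegral_Ioc_rpow (by linarith) hℓ, sub_add_cancel,
    ← ENNReal.ofReal_mul (inv_nonneg.mpr (pow_nonneg (by linarith) _))]
  congr 1
  ring

theorem lintegral_maxSliceWeight_Ioi {a e ℓ : ℝ} (he : -1 < e)
    (hp : (n + 1) * (e + 1) + a < 0) (hℓ : 0 < ℓ) :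
    ∫⁻ x, maxSliceWeight j (Ioi ℓ) a e x = ENNReal.ofReal
      (((e + 1) ^ n)⁻¹ / -((n + 1) * (e + 1) + a) * ℓ ^ ((n + 1) * (e + 1) + a)) := by
  rw [lintegral_maxSliceWeight j measurableSet_Ioi (fun t ht => hℓ.trans ht) a he,
    lintegral_Ioi_rpow (by linarith) hℓ, sub_add_cancel,
    ← ENNReal.ofReal_mul (inv_nonneg.mpr (pow_nonneg (by linarith) _))]
  congr 1
  rw [div_neg, neg_div]
  ring

end MaxSlice

def hyperbolicRegion (r : ℕ) (Ξ : ℝ) : Set (Fin r → ℝ) :=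
  {x | (∀ k, 1 ≤ x k) ∧ ∏ k, x k ≤ Ξ}

noncomputable def powerRatio {r : ℕ} (β α : ℝ) (x : Fin r → ℝ) : ℝ :=
  (∏ k, x k ^ β) * (∑ k, x k ^ α)⁻¹

section PowerRatio

variable {r : ℕ} {β α Ξ : ℝ}

theorem measurableSet_hyperbolicRegion : MeasurableSet (hyperbolicRegion r Ξ) := by
  unfold hyperbolicRegion
  measurability

theorem measurable_powerRatio : Measurable (powerRatio (r := r) β α) := by
  unfold powerRatio
  fun_prop

theorem powerRatio_nonneg {x : Fin r → ℝ} (hx : ∀ k, 0 ≤ x k) : 0 ≤ powerRatio β α x :=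
  mul_nonneg (Finset.prod_nonneg fun k _ => Real.rpow_nonneg (hx k) β)
    (inv_nonneg.mpr (Finset.sum_nonneg fun k _ => Real.rpow_nonneg (hx k) α))

theorem powerRatio_le {x : Fin r → ℝ} (hx : ∀ k, 0 < x k) (j : Fin r) :
    powerRatio β α x ≤ x j ^ (-α) * ∏ k, x k ^ β := by
  rw [powerRatio, mul_comm, Real.rpow_neg (hx j).le]
  refine mul_le_mul_of_nonneg_right (inv_anti₀ (Real.rpow_pos_of_pos (hx j) α) ?_)
    (Finset.prod_nonneg fun k _ => Real.rpow_nonneg (hx k).le β)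
  exact Finset.single_le_sum (f := fun k => x k ^ α)
    (fun k _ => Real.rpow_nonneg (hx k).le α) (Finset.mem_univ j)

theorem prod_rpow_le_mul_prod_rpow_sub {x : Fin r → ℝ} (hx : x ∈ hyperbolicRegion r Ξ)
    {η : ℝ} (hη : 0 ≤ η) : ∏ k, x k ^ β ≤ Ξ ^ η * ∏ k, x k ^ (β - η) := by
  have hx0 (k : Fin r) : 0 < x k := one_pos.trans_le (hx.1 k)
  calc ∏ k, x k ^ β = (∏ k, x k) ^ η * ∏ k, x k ^ (β - η) := by
        rw [← Real.finsetProd_rpow _ _ fun k _ => (hx0 k).le, ← Finset.prod_mul_distrib]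
        refine Finset.prod_congr rfl fun k _ => ?_
        rw [← Real.rpow_add (hx0 k), add_sub_cancel]
    _ ≤ Ξ ^ η * ∏ k, x k ^ (β - η) :=
        mul_le_mul_of_nonneg_right
          (Real.rpow_le_rpow (Finset.prod_nonneg fun k _ => (hx0 k).le) hx.2 hη)
          (Finset.prod_nonneg fun k _ => Real.rpow_nonneg (hx0 k).le _)

theorem integral_powerRatio_eq_toReal_lintegral :
    ∫ x in hyperbolicRegion r Ξ, powerRatio β α x =
      (∫⁻ x in hyperbolicRegion r Ξ, ENNReal.ofReal (powerRatio β α x)).toReal :=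
  integral_eq_lintegral_of_nonneg_ae
    (ae_restrict_of_forall_mem measurableSet_hyperbolicRegion
      fun _ hx => powerRatio_nonneg fun k => zero_le_one.trans (hx.1 k))
    measurable_powerRatio.aestronglyMeasurable

end PowerRatio

section PointwiseBound

variable {n : ℕ} {β α Ξ η : ℝ}

theorem maxSliceWeight_of_forall_le {x : Fin (n + 1) → ℝ} (hx : ∀ k, 0 < x k)
    {j : Fin (n + 1)} (hj : ∀ k, x k ≤ x j) {T : Set ℝ} (hT : x j ∈ T) (a e : ℝ) :
    maxSliceWeight j T a e x = ENNReal.ofReal (x j ^ a * ∏ k, x k ^ e) := by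
  rw [maxSliceWeight, indicator_of_mem hT, ENNReal.ofReal_mul (Real.rpow_nonneg (hx j).le a),
    ENNReal.ofReal_prod_of_nonneg fun k _ => Real.rpow_nonneg (hx k).le e]
  congr 1
  exact Finset.prod_congr rfl fun k _ =>
    indicator_of_mem (show x k ∈ Ioc 0 (x j) from ⟨hx k, hj k⟩) _

theorem ofReal_powerRatio_le_maxSliceWeight {x : Fin (n + 1) → ℝ}
    (hx : x ∈ hyperbolicRegion (n + 1) Ξ) {j : Fin (n + 1)} (hj : ∀ k, x k ≤ x j)
    (hη : 0 ≤ η) {T : Set ℝ} (hT : x j ∈ T) :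
    ENNReal.ofReal (powerRatio β α x) ≤
      ENNReal.ofReal (Ξ ^ η) * maxSliceWeight j T (-α) (β - η) x := by
  have hx0 (k : Fin (n + 1)) : 0 < x k := one_pos.trans_le (hx.1 k)
  rw [maxSliceWeight_of_forall_le hx0 hj hT, ← ENNReal.ofReal_mul' (mul_nonneg
    (Real.rpow_nonneg (hx0 j).le _) (Finset.prod_nonneg fun k _ => Real.rpow_nonneg (hx0 k).le _))]
  refine ENNReal.ofReal_le_ofReal ((powerRatio_le hx0 j).trans ?_)
  calc x j ^ (-α) * ∏ k, x k ^ β ≤ x j ^ (-α) * (Ξ ^ η * ∏ k, x k ^ (β - η)) :=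
        mul_le_mul_of_nonneg_left (prod_rpow_le_mul_prod_rpow_sub hx hη)
          (Real.rpow_nonneg (hx0 j).le _)
    _ = Ξ ^ η * (x j ^ (-α) * ∏ k, x k ^ (β - η)) := by ring

theorem ofReal_powerRatio_le_sum_maxSliceWeight {x : Fin (n + 1) → ℝ}
    (hx : x ∈ hyperbolicRegion (n + 1) Ξ) (hη : 0 ≤ η) (ℓ : ℝ) :
    ENNReal.ofReal (powerRatio β α x) ≤ ∑ j, (maxSliceWeight j (Ioc 0 ℓ) (-α) β x +
      ENNReal.ofReal (Ξ ^ η) * maxSliceWeight j (Ioi ℓ) (-α) (β - η) x) := by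
  obtain ⟨j, -, hj⟩ := Finset.exists_max_image Finset.univ x Finset.univ_nonempty
  have hj' (k : Fin (n + 1)) : x k ≤ x j := hj k (Finset.mem_univ k)
  refine le_trans ?_ (Finset.single_le_sum (fun _ _ => zero_le) (Finset.mem_univ j))
  rcases le_or_gt (x j) ℓ with hjℓ | hjℓ
  · have hslice := ofReal_powerRatio_le_maxSliceWeight (β := β) (α := α) hx hj' le_rfl
      (T := Ioc 0 ℓ) ⟨one_pos.trans_le (hx.1 j), hjℓ⟩
    rw [Real.rpow_zero, ENNReal.ofReal_one, one_mul, sub_zero] at hslice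
    exact le_add_right hslice
  · exact le_add_left (ofReal_powerRatio_le_maxSliceWeight hx hj' hη hjℓ)

theorem lintegral_powerRatio_le_sum_lintegral_maxSliceWeight (hη : 0 ≤ η) (ℓ : ℝ) :
    ∫⁻ x in hyperbolicRegion (n + 1) Ξ, ENNReal.ofReal (powerRatio β α x) ≤
      ∑ j : Fin (n + 1), ((∫⁻ x, maxSliceWeight j (Ioc 0 ℓ) (-α) β x) +
        ENNReal.ofReal (Ξ ^ η) * ∫⁻ x, maxSliceWeight j (Ioi ℓ) (-α) (β - η) x) := by
  have hIoc (j : Fin (n + 1)) :=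
    measurable_maxSliceWeight j (measurableSet_Ioc (a := 0) (b := ℓ)) (-α) β
  have hIoi (j : Fin (n + 1)) :=
    measurable_maxSliceWeight j (measurableSet_Ioi (a := ℓ)) (-α) (β - η)
  calc ∫⁻ x in hyperbolicRegion (n + 1) Ξ, ENNReal.ofReal (powerRatio β α x)
      ≤ ∫⁻ x in hyperbolicRegion (n + 1) Ξ, ∑ j, (maxSliceWeight j (Ioc 0 ℓ) (-α) β x +
          ENNReal.ofReal (Ξ ^ η) * maxSliceWeight j (Ioi ℓ) (-α) (β - η) x) :=
        setLIntegral_mono' measurableSet_hyperbolicRegion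
          fun x hx => ofReal_powerRatio_le_sum_maxSliceWeight hx hη ℓ
    _ ≤ ∫⁻ x, ∑ j, (maxSliceWeight j (Ioc 0 ℓ) (-α) β x +
          ENNReal.ofReal (Ξ ^ η) * maxSliceWeight j (Ioi ℓ) (-α) (β - η) x) :=
        setLIntegral_le_lintegral _ _
    _ = _ := by
        rw [lintegral_finsetSum _ fun j _ => ?_]
        · refine Finset.sum_congr rfl fun j _ => ?_
          rw [lintegral_add_left (hIoc j), lintegral_const_mul _ (hIoi j)]
        · exact (hIoc j).add ((hIoi j).const_mul _)

theorem le_powerRatio_of_forall_mem_Icc {x : Fin (n + 1) → ℝ} {a b : ℝ} (ha : 0 < a)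
    (hx : ∀ k, x k ∈ Icc a b) (hβ : 0 ≤ β) (hα : 0 ≤ α) :
    (a ^ β) ^ (n + 1) / ((n + 1) * b ^ α) ≤ powerRatio β α x := by
  have hx0 (k : Fin (n + 1)) : 0 < x k := ha.trans_le (hx k).1
  have hb : 0 ≤ b := (hx0 0).le.trans (hx 0).2
  have hprod : (a ^ β) ^ (n + 1) ≤ ∏ k, x k ^ β :=
    (by simp : (a ^ β) ^ (n + 1) = ∏ _k : Fin (n + 1), a ^ β) ▸
      Finset.prod_le_prod (fun k _ => Real.rpow_nonneg ha.le β)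
        fun k _ => Real.rpow_le_rpow ha.le (hx k).1 hβ
  have hsum : ∑ k, x k ^ α ≤ (n + 1) * b ^ α :=
    (Finset.sum_le_sum fun k _ => Real.rpow_le_rpow (hx0 k).le (hx k).2 hα).trans_eq (by simp)
  rw [div_eq_mul_inv, powerRatio]
  exact mul_le_mul hprod (inv_anti₀ (Finset.sum_pos (fun k _ => Real.rpow_pos_of_pos (hx0 k) α)
    Finset.univ_nonempty) hsum)
    (inv_nonneg.mpr (mul_nonneg (by positivity) (Real.rpow_nonneg hb α)))
    (Finset.prod_nonneg fun k _ => Real.rpow_nonneg (hx0 k).le β)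

end PointwiseBound

theorem lintegral_powerRatio_le (n : ℕ) {β α : ℝ} (hα : 0 < α)
    (hαβ : α < (n + 1) * (β + 1)) :
    ∃ C, 0 < C ∧ ∀ ℓ, 0 < ℓ →
      ∫⁻ x in hyperbolicRegion (n + 1) (ℓ ^ (n + 1)), ENNReal.ofReal (powerRatio β α x) ≤
        ENNReal.ofReal (C * ℓ ^ ((n + 1) * (β + 1) - α)) := by
  set δ : ℝ := α / (2 * (n + 1)) with hδ
  set η : ℝ := β + 1 - δ with hη
  have hn : (0 : ℝ) < n + 1 := by positivity
  have hδ0 : 0 < δ := by positivity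
  have hβ1 : 0 < β + 1 := pos_of_mul_pos_right (hα.trans hαβ) hn.le
  have hη0 : 0 ≤ η := by
    have : δ < β + 1 := by rw [hδ, div_lt_iff₀ (by positivity)]; nlinarith
    linarith
  have hβ : -1 < β := by linarith
  set p : ℝ := (n + 1) * (β + 1) - α with hp
  have hp0 : 0 < p := by linarith
  refine ⟨(n + 1) * (((β + 1) ^ n)⁻¹ / p + (δ ^ n)⁻¹ * (2 / α)), by positivity,
    fun ℓ hℓ => ?_⟩
  have hA (j : Fin (n + 1)) : ∫⁻ x, maxSliceWeight j (Ioc 0 ℓ) (-α) β x =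
      ENNReal.ofReal (((β + 1) ^ n)⁻¹ / p * ℓ ^ p) := by
    rw [lintegral_maxSliceWeight_Ioc j hβ (by linarith) hℓ.le, ← sub_eq_add_neg]
  have hB (j : Fin (n + 1)) : ENNReal.ofReal ((ℓ ^ (n + 1)) ^ η) *
      ∫⁻ x, maxSliceWeight j (Ioi ℓ) (-α) (β - η) x =
      ENNReal.ofReal ((δ ^ n)⁻¹ * (2 / α) * ℓ ^ p) := by
    have hδη : β - η + 1 = δ := by rw [hη]; ring
    have hpB : (n + 1) * δ + -α = -(α / 2) := by rw [hδ]; field_simp; ring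
    rw [lintegral_maxSliceWeight_Ioi j (by linarith) (by rw [hδη, hpB]; linarith) hℓ,
      hδη, hpB, ← ENNReal.ofReal_mul (by positivity), ← Real.rpow_natCast_mul hℓ.le]
    congr 1
    rw [show p = (n + 1 : ℕ) * η + -(α / 2) by push_cast; rw [hη, hδ, hp]; field_simp; ring,
      Real.rpow_add hℓ]
    field_simp
  calc ∫⁻ x in hyperbolicRegion (n + 1) (ℓ ^ (n + 1)), ENNReal.ofReal (powerRatio β α x)
      ≤ ∑ j : Fin (n + 1), ((∫⁻ x, maxSliceWeight j (Ioc 0 ℓ) (-α) β x) +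
          ENNReal.ofReal ((ℓ ^ (n + 1)) ^ η) *
            ∫⁻ x, maxSliceWeight j (Ioi ℓ) (-α) (β - η) x) :=
        lintegral_powerRatio_le_sum_lintegral_maxSliceWeight hη0 ℓ
    _ = ∑ j : Fin (n + 1),
          ENNReal.ofReal ((((β + 1) ^ n)⁻¹ / p + (δ ^ n)⁻¹ * (2 / α)) * ℓ ^ p) := by
        refine Finset.sum_congr rfl fun j _ => ?_
        rw [hA, hB, ← ENNReal.ofReal_add (by positivity) (by positivity), add_mul]
    _ = _ := by
        rw [Finset.sum_const, Finset.card_univ, Fintype.card_fin, nsmul_eq_mul,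
          ← ENNReal.ofReal_natCast, ← ENNReal.ofReal_mul (by positivity)]
        push_cast
        ring_nf

theorem le_lintegral_powerRatio (n : ℕ) {β α ℓ : ℝ} (hβ : 0 ≤ β) (hα : 0 ≤ α)
    (hℓ : 2 ≤ ℓ) :
    ENNReal.ofReal (((2 : ℝ) ^ ((n + 1) * (β + 1)) * (n + 1))⁻¹ *
        ℓ ^ ((n + 1) * (β + 1) - α)) ≤
      ∫⁻ x in hyperbolicRegion (n + 1) (ℓ ^ (n + 1)), ENNReal.ofReal (powerRatio β α x) := by
  have hℓ0 : 0 < ℓ := by linarith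
  set Q : Set (Fin (n + 1) → ℝ) := univ.pi fun _ => Icc (ℓ / 2) ℓ
  have hQ0 {x : Fin (n + 1) → ℝ} (hx : x ∈ Q) (k : Fin (n + 1)) : 1 ≤ x k := by
    linarith [(hx k (mem_univ k)).1]
  have hQS : Q ⊆ hyperbolicRegion (n + 1) (ℓ ^ (n + 1)) := fun x hx =>
    ⟨hQ0 hx, (Finset.prod_le_prod (fun k _ => zero_le_one.trans (hQ0 hx k))
      fun k _ => (hx k (mem_univ k)).2).trans_eq (by simp)⟩
  set c : ℝ := ((ℓ / 2) ^ β) ^ (n + 1) / ((n + 1) * ℓ ^ α) with hc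
  have hsplit (y : ℝ) (hy : 0 < y) :
      y ^ ((n + 1) * (β + 1)) = (y ^ β) ^ (n + 1) * y ^ (n + 1) := by
    rw [← Real.rpow_mul_natCast hy.le, ← Real.rpow_natCast, ← Real.rpow_add hy]
    push_cast
    ring_nf
  calc ENNReal.ofReal (((2 : ℝ) ^ ((n + 1) * (β + 1)) * (n + 1))⁻¹ *
        ℓ ^ ((n + 1) * (β + 1) - α))
      = ENNReal.ofReal c * volume Q := by
        rw [volume_pi_pi, Real.volume_Icc, Finset.prod_const, Finset.card_univ, Fintype.card_fin,
          ← ENNReal.ofReal_pow (by linarith), ← ENNReal.ofReal_mul (by positivity), hc,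
          Real.rpow_sub hℓ0, hsplit ℓ hℓ0, hsplit 2 two_pos,
          Real.div_rpow hℓ0.le zero_le_two, show ℓ - ℓ / 2 = ℓ / 2 by ring]
        congr 1
        field_simp
        rw [div_pow, div_pow]
        field_simp
    _ = ∫⁻ _ in Q, ENNReal.ofReal c := (setLIntegral_const _ _).symm
    _ ≤ ∫⁻ x in Q, ENNReal.ofReal (powerRatio β α x) :=
        setLIntegral_mono measurable_powerRatio.ennreal_ofReal
          fun x hx => ENNReal.ofReal_le_ofReal
            (le_powerRatio_of_forall_mem_Icc (by positivity) (fun k => hx k (mem_univ k)) hβ hα)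
    _ ≤ _ := lintegral_mono_set hQS

/-- For `r ≥ 3`, `β ≥ 0`, `0 < α ≤ 2`, the integral of
`(∏ x_k^β)(x₁^α+⋯+x_r^α)⁻¹` over `{x ∈ [1,∞)^r : x₁⋯x_r ≤ Ξ}` is
`≍ Ξ^{β+1-α/r}` as `Ξ → ∞`. -/
theorem integral_product_region_asymp (r : ℕ) (hr : 3 ≤ r) (β α : ℝ)
    (hβ : 0 ≤ β) (hα0 : 0 < α) (hα2 : α ≤ 2) :
    ∃ c C Ξ₀ : ℝ, 0 < c ∧ c ≤ C ∧ 0 < Ξ₀ ∧ ∀ Ξ : ℝ, Ξ₀ ≤ Ξ →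
      c * Ξ ^ (β + 1 - α / r) ≤
        (∫ x : Fin r → ℝ in {x | (∀ k, 1 ≤ x k) ∧ (∏ k, x k) ≤ Ξ},
          (∏ k, (x k) ^ β) * (∑ k, (x k) ^ α)⁻¹) ∧
      (∫ x : Fin r → ℝ in {x | (∀ k, 1 ≤ x k) ∧ (∏ k, x k) ≤ Ξ},
          (∏ k, (x k) ^ β) * (∑ k, (x k) ^ α)⁻¹) ≤
        C * Ξ ^ (β + 1 - α / r) := by
  obtain ⟨n, rfl⟩ : ∃ n, r = n + 1 := ⟨r - 1, by omega⟩
  have hn : (3 : ℝ) ≤ n + 1 := by exact_mod_cast hr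
  obtain ⟨C, hC, hC_bound⟩ := lintegral_powerRatio_le n (β := β) hα0 (by nlinarith)
  set c : ℝ := ((2 : ℝ) ^ ((n + 1) * (β + 1)) * (n + 1))⁻¹
  refine ⟨c, max C c, 2 ^ (n + 1), by positivity, le_max_right _ _, by positivity,
    fun Ξ hΞ => ?_⟩
  set ℓ := Ξ ^ ((n + 1 : ℕ) : ℝ)⁻¹ with hℓ
  have hΞ0 : 0 ≤ Ξ := (by positivity : (0 : ℝ) ≤ 2 ^ (n + 1)).trans hΞ
  have hℓΞ : ℓ ^ (n + 1) = Ξ := Real.rpow_inv_natCast_pow hΞ0 n.succ_ne_zero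
  have hℓ2 : 2 ≤ ℓ := (pow_le_pow_iff_left₀ zero_le_two (by positivity) n.succ_ne_zero).mp
    (hℓΞ ▸ hΞ)
  have hexp : ℓ ^ ((n + 1) * (β + 1) - α) = Ξ ^ (β + 1 - α / ((n + 1 : ℕ) : ℝ)) := by
    rw [hℓ, ← Real.rpow_mul hΞ0]
    push_cast
    field_simp
  have hlower := le_lintegral_powerRatio n hβ hα0.le hℓ2
  have hupper := hC_bound ℓ (by linarith)
  rw [hℓΞ, hexp] at hlower hupper
  change c * _ ≤ ∫ x in hyperbolicRegion (n + 1) Ξ, powerRatio β α x ∧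
    ∫ x in hyperbolicRegion (n + 1) Ξ, powerRatio β α x ≤ _
  rw [integral_powerRatio_eq_toReal_lintegral]
  exact ⟨(ENNReal.ofReal_le_iff_le_toReal (ne_top_of_le_ne_top ENNReal.ofReal_ne_top hupper)).mp
      hlower,
    (ENNReal.toReal_le_of_le_ofReal (by positivity) hupper).trans
      (mul_le_mul_of_nonneg_right (le_max_left _ _) (by positivity))⟩
end

section
/- Fix an integer r ≥ 1, an integer s ≥ 1, and a real β ≥ 0 with β ≠ 1. As Ξ → ∞, the integral of x₁^β⋯x_r^β z^β (log z)^s (x₁² + ⋯ + x_r²)^{-1} over the region {x₁⋯x_r · z ≤ Ξ, all x_k ≥ 1, z ≥ 1} is bounded above and below by positive constant multiples of Ξ^{β+1}(log Ξ)^s. -/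
/-!
Upper bound: on the region `(x₁⋯x_r z)^β (log z)^s ≤ Ξ^β (log Ξ)^s`, and by AM-GM
`x₁² + ⋯ + x_r² ≥ (x₁⋯x_r)^{2/r}`. Integrating out `z ∈ [1, Ξ/(x₁⋯x_r)]` first leaves
`Ξ ∫_{[1,∞)^r} (x₁⋯x_r)^{-1-2/r} dx = (r/2)^r Ξ`.

Lower bound: for `a ≥ 1` the box `[1,2]^r × [a, 2a]` lies in the region for `Ξ = 2^{r+1} a`,
has volume `a`, and the integrand is at least `a^β (log a)^s / (4r)` on it. Taking
`a = Ξ/2^{r+1}` gives `log a ≥ (log Ξ)/2` as soon as `Ξ ≥ 4^{r+1}`.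
-/
open MeasureTheory Set Real

theorem prod_rpow_two_div_card_le_sum_sq {ι : Type*} [Fintype ι] [Nonempty ι] {x : ι → ℝ}
    (hx : ∀ i, 0 ≤ x i) : (∏ i, x i) ^ (2 / Fintype.card ι : ℝ) ≤ ∑ i, x i ^ 2 := by
  have hn : (1 : ℝ) ≤ Fintype.card ι := by exact_mod_cast Fintype.card_pos
  have amgm := geom_mean_le_arith_mean Finset.univ (fun _ => 1) (fun i => x i ^ 2)
    (fun _ _ => zero_le_one) (by simpa using Fintype.card_pos) (fun i _ => sq_nonneg _)
  simp only [rpow_one, Finset.sum_const, Finset.card_univ, nsmul_eq_mul, mul_one,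
    one_mul] at amgm
  calc (∏ i, x i) ^ (2 / Fintype.card ι : ℝ) = (∏ i, x i ^ 2) ^ (Fintype.card ι : ℝ)⁻¹ := by
        rw [Finset.prod_pow, div_eq_mul_inv, rpow_mul (Finset.prod_nonneg fun i _ => hx i),
          rpow_two]
    _ ≤ (∑ i, x i ^ 2) / Fintype.card ι := amgm
    _ ≤ ∑ i, x i ^ 2 := div_le_self (by positivity) hn

theorem single_le_prod_of_one_le {ι : Type*} [Fintype ι] {x : ι → ℝ} (hx : ∀ i, 1 ≤ x i)
    (i : ι) : x i ≤ ∏ j, x j := by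
  simpa using Finset.prod_le_prod_of_subset_of_one_le (Finset.subset_univ {i})
    (fun j _ => zero_le_one.trans (hx j)) (fun j _ _ => hx j)

section RpowTail

noncomputable def rpowTail (a t : ℝ) : ℝ := (Ici 1).indicator (fun t => t ^ (-(1 + a))) t

variable {a : ℝ}

theorem integrable_rpowTail (ha : 0 < a) : Integrable (rpowTail a) := by
  refine (integrable_indicator_iff measurableSet_Ici).2 ?_
  rw [integrableOn_Ici_iff_integrableOn_Ioi]
  exact integrableOn_Ioi_rpow_of_lt (by linarith) one_pos

theorem integral_rpowTail (ha : 0 < a) : ∫ t, rpowTail a t = a⁻¹ := by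
  rw [show rpowTail a = (Ici 1).indicator (fun t => t ^ (-(1 + a))) from rfl,
    integral_indicator measurableSet_Ici, integral_Ici_eq_integral_Ioi,
    integral_Ioi_rpow_of_lt (by linarith) one_pos, one_rpow]
  rw [show -(1 + a) + 1 = -a by ring, neg_div_neg_eq, one_div]

theorem prod_rpowTail_of_one_le {ι : Type*} [Fintype ι] {x : ι → ℝ} (hx : ∀ i, 1 ≤ x i) :
    ∏ i, rpowTail a (x i) = (∏ i, x i) ^ (-(1 + a)) := by
  rw [← finsetProd_rpow _ _ fun i _ => zero_le_one.trans (hx i)]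
  exact Finset.prod_congr rfl fun i _ => indicator_of_mem (hx i) _

end RpowTail

namespace IntegralLogWeight

variable {r s : ℕ} {β Ξ : ℝ}

def region (r : ℕ) (Ξ : ℝ) : Set ((Fin r → ℝ) × ℝ) :=
  {xz | (∀ k, 1 ≤ xz.1 k) ∧ 1 ≤ xz.2 ∧ (∏ k, xz.1 k) * xz.2 ≤ Ξ}

noncomputable def invSumSq (x : Fin r → ℝ) : ℝ := (∑ k, x k ^ 2)⁻¹

noncomputable def weight (s : ℕ) (β : ℝ) (xz : (Fin r → ℝ) × ℝ) : ℝ :=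
  (∏ k, xz.1 k ^ β) * xz.2 ^ β * log xz.2 ^ s * invSumSq xz.1

theorem region_subset_pi_Icc_prod_Icc : region r Ξ ⊆ (univ.pi fun _ => Icc 1 Ξ) ×ˢ Icc 1 Ξ := by
  rintro ⟨x, z⟩ ⟨hx, hz, hxz⟩
  have hP : 1 ≤ ∏ k, x k := Finset.one_le_prod fun k _ => hx k
  refine ⟨fun k _ => ⟨hx k, ?_⟩, hz, by nlinarith⟩
  nlinarith [single_le_prod_of_one_le hx k]

theorem isClosed_region : IsClosed (region r Ξ) := by
  have hx : IsClosed {xz : (Fin r → ℝ) × ℝ | ∀ k, 1 ≤ xz.1 k} := by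
    simp only [ofPred_forall]
    exact isClosed_iInter fun k => isClosed_le continuous_const (by fun_prop)
  exact hx.inter ((isClosed_le continuous_const continuous_snd).inter
    (isClosed_le (f := fun xz : (Fin r → ℝ) × ℝ => (∏ k, xz.1 k) * xz.2) (by fun_prop)
      continuous_const))

theorem isCompact_region : IsCompact (region r Ξ) :=
  ((isCompact_univ_pi fun _ => isCompact_Icc).prod isCompact_Icc).of_isClosed_subset
    isClosed_region region_subset_pi_Icc_prod_Icc

theorem measurableSet_region : MeasurableSet (region r Ξ) := isClosed_region.measurableSet

theorem continuousOn_invSumSq_fst (hr : 1 ≤ r) :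
    ContinuousOn (fun xz : (Fin r → ℝ) × ℝ => invSumSq xz.1) (region r Ξ) := by
  have : Nonempty (Fin r) := ⟨⟨0, hr⟩⟩
  refine ContinuousOn.inv₀ (by fun_prop) fun xz hxz => (Finset.sum_pos
    (fun k _ => by nlinarith [hxz.1 k]) Finset.univ_nonempty).ne'

theorem integrableOn_invSumSq_fst (hr : 1 ≤ r) :
    IntegrableOn (fun xz : (Fin r → ℝ) × ℝ => invSumSq xz.1) (region r Ξ) :=
  (continuousOn_invSumSq_fst hr).integrableOn_compact isCompact_region

theorem integrableOn_weight (hr : 1 ≤ r) : IntegrableOn (weight s β) (region r Ξ) := by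
  refine ContinuousOn.integrableOn_compact isCompact_region ?_
  have hx : ∀ xz ∈ region r Ξ, ∀ k, xz.1 k ≠ 0 := fun xz h k => by linarith [h.1 k]
  have hz : ∀ xz ∈ region r Ξ, xz.2 ≠ 0 := fun xz h => by linarith [h.2.1]
  refine ContinuousOn.mul ?_ (continuousOn_invSumSq_fst hr)
  refine ((continuousOn_finsetProd _ fun k _ => ?_).mul ?_).mul ?_
  · exact ContinuousOn.rpow_const (by fun_prop) fun xz h => Or.inl (hx xz h k)
  · exact ContinuousOn.rpow_const (by fun_prop) fun xz h => Or.inl (hz xz h)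
  · exact (continuousOn_snd.log hz).pow s

theorem weight_le_of_mem_region (hβ : 0 ≤ β) {xz : (Fin r → ℝ) × ℝ} (h : xz ∈ region r Ξ) :
    weight s β xz ≤ Ξ ^ β * log Ξ ^ s * invSumSq xz.1 := by
  obtain ⟨hx, hz, hxz⟩ := h
  have hP : 1 ≤ ∏ k, xz.1 k := Finset.one_le_prod fun k _ => hx k
  have hzΞ : xz.2 ≤ Ξ := by nlinarith
  have hprod : (∏ k, xz.1 k ^ β) * xz.2 ^ β = ((∏ k, xz.1 k) * xz.2) ^ β := by
    rw [finsetProd_rpow _ _ fun k _ => zero_le_one.trans (hx k),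
      mul_rpow (by linarith) (by linarith)]
  rw [weight, hprod]
  have : 0 ≤ invSumSq xz.1 := by unfold invSumSq; positivity
  have := log_nonneg hz
  have : 0 ≤ Ξ ^ β := rpow_nonneg (by linarith) β
  gcongr

theorem invSumSq_le_prod_rpow (hr : 1 ≤ r) {x : Fin r → ℝ} (hx : ∀ k, 1 ≤ x k) :
    invSumSq x ≤ (∏ k, x k) ^ (-(2 / r : ℝ)) := by
  have : Nonempty (Fin r) := ⟨⟨0, hr⟩⟩
  have hP : 0 < ∏ k, x k := Finset.prod_pos fun k _ => zero_lt_one.trans_le (hx k)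
  rw [rpow_neg hP.le, invSumSq]
  refine inv_anti₀ (rpow_pos_of_pos hP _) ?_
  simpa using prod_rpow_two_div_card_le_sum_sq fun k => zero_le_one.trans (hx k)

theorem indicator_region_slice {x : Fin r → ℝ} (hx : ∀ k, 1 ≤ x k)
    (F : (Fin r → ℝ) × ℝ → ℝ) :
    (fun z => (region r Ξ).indicator F (x, z)) =
      (Icc 1 (Ξ / ∏ k, x k)).indicator fun z => F (x, z) := by
  have hP : 0 < ∏ k, x k := Finset.prod_pos fun k _ => zero_lt_one.trans_le (hx k)
  ext z
  have : (x, z) ∈ region r Ξ ↔ z ∈ Icc 1 (Ξ / ∏ k, x k) := by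
    simp [region, hx, le_div_iff₀ hP, mul_comm]
  by_cases hz : (x, z) ∈ region r Ξ
  · rw [indicator_of_mem hz, indicator_of_mem (this.1 hz)]
  · rw [indicator_of_notMem hz, indicator_of_notMem (mt this.2 hz)]

theorem integral_slice_invSumSq_le (hr : 1 ≤ r) (hΞ : 0 ≤ Ξ) (x : Fin r → ℝ) :
    ∫ z, (region r Ξ).indicator (fun xz => invSumSq xz.1) (x, z) ≤
      Ξ * ∏ k, rpowTail (2 / r) (x k) := by
  by_cases hx : ∀ k, 1 ≤ x k
  · have hP : 0 < ∏ k, x k := Finset.prod_pos fun k _ => zero_lt_one.trans_le (hx k)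
    have hvol : volume.real (Icc 1 (Ξ / ∏ k, x k)) ≤ Ξ / ∏ k, x k := by
      rw [Real.volume_real_Icc]
      exact max_le (by linarith) (by positivity)
    simp only [indicator_region_slice hx, integral_indicator measurableSet_Icc]
    rw [setIntegral_const, smul_eq_mul, prod_rpowTail_of_one_le hx,
      show -(1 + 2 / r : ℝ) = -1 + -(2 / r) by ring, rpow_add hP, rpow_neg_one]
    calc volume.real (Icc 1 (Ξ / ∏ k, x k)) * invSumSq x
        ≤ Ξ / (∏ k, x k) * (∏ k, x k) ^ (-(2 / r : ℝ)) := by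
          gcongr
          · unfold invSumSq; positivity
          · exact invSumSq_le_prod_rpow hr hx
      _ = _ := by ring
  · push Not at hx
    obtain ⟨k, hk⟩ := hx
    have hzero : ∀ z, (region r Ξ).indicator (fun xz => invSumSq xz.1) (x, z) = 0 :=
      fun z => indicator_of_notMem (fun h => (h.1 k).not_gt hk) _
    simp only [hzero, integral_zero]
    rw [Finset.prod_eq_zero (Finset.mem_univ k) (indicator_of_notMem hk.not_ge _), mul_zero]

theorem setIntegral_invSumSq_region_le (hr : 1 ≤ r) (hΞ : 0 ≤ Ξ) :
    ∫ xz in region r Ξ, invSumSq xz.1 ≤ (r / 2 : ℝ) ^ r * Ξ := by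
  have hr' : (0 : ℝ) < 2 / r := by positivity
  have hint : Integrable ((region r Ξ).indicator fun xz => invSumSq xz.1)
      (volume.prod volume) :=
    (integrable_indicator_iff measurableSet_region).2 (integrableOn_invSumSq_fst hr)
  rw [← integral_indicator measurableSet_region, Measure.volume_eq_prod, integral_prod _ hint]
  calc ∫ x, ∫ z, (region r Ξ).indicator (fun xz => invSumSq xz.1) (x, z)
      ≤ ∫ x : Fin r → ℝ, Ξ * ∏ k, rpowTail (2 / r) (x k) :=
        integral_mono hint.integral_prod_left
          ((Integrable.fintype_prod fun _ => integrable_rpowTail hr').const_mul Ξ)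
          (integral_slice_invSumSq_le hr hΞ)
    _ = (r / 2 : ℝ) ^ r * Ξ := by
        rw [integral_const_mul, integral_fintype_prod_volume_eq_pow, integral_rpowTail hr',
          Fintype.card_fin, inv_div, mul_comm]

theorem setIntegral_weight_le (hr : 1 ≤ r) (hβ : 0 ≤ β) (hΞ : 1 ≤ Ξ) :
    ∫ xz in region r Ξ, weight s β xz ≤ (r / 2 : ℝ) ^ r * Ξ ^ (β + 1) * log Ξ ^ s := by
  have hΞ0 : 0 < Ξ := zero_lt_one.trans_le hΞ
  calc ∫ xz in region r Ξ, weight s β xz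
      ≤ ∫ xz in region r Ξ, Ξ ^ β * log Ξ ^ s * invSumSq xz.1 :=
        setIntegral_mono_on (integrableOn_weight hr) ((integrableOn_invSumSq_fst hr).const_mul _)
          measurableSet_region fun xz h => weight_le_of_mem_region hβ h
    _ = Ξ ^ β * log Ξ ^ s * ∫ xz in region r Ξ, invSumSq xz.1 := integral_const_mul _ _
    _ ≤ Ξ ^ β * log Ξ ^ s * ((r / 2 : ℝ) ^ r * Ξ) := by
        have := log_nonneg hΞ
        gcongr
        exact setIntegral_invSumSq_region_le hr hΞ0.le
    _ = (r / 2 : ℝ) ^ r * Ξ ^ (β + 1) * log Ξ ^ s := by rw [rpow_add_one hΞ0.ne']; ring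

theorem weight_nonneg_of_mem_region {xz : (Fin r → ℝ) × ℝ} (h : xz ∈ region r Ξ) :
    0 ≤ weight s β xz := by
  have := log_nonneg h.2.1
  have : 0 ≤ ∏ k, xz.1 k ^ β :=
    Finset.prod_nonneg fun k _ => rpow_nonneg (zero_le_one.trans (h.1 k)) β
  have : 0 ≤ xz.2 ^ β := rpow_nonneg (zero_le_one.trans h.2.1) β
  unfold weight invSumSq
  positivity

def box (r : ℕ) (a : ℝ) : Set ((Fin r → ℝ) × ℝ) := (univ.pi fun _ => Icc 1 2) ×ˢ Icc a (2 * a)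

variable {a : ℝ}

theorem box_subset_region (ha : 1 ≤ a) : box r a ⊆ region r (2 ^ (r + 1) * a) := by
  rintro ⟨x, z⟩ ⟨hx, hz, hz'⟩
  simp only [mem_pi, mem_univ, mem_Icc, forall_const] at hx
  have hP : ∏ k, x k ≤ 2 ^ r := by
    simpa using Finset.prod_le_prod (s := Finset.univ) (fun k _ => zero_le_one.trans (hx k).1)
      fun k _ => (hx k).2
  refine ⟨fun k => (hx k).1, ha.trans hz, ?_⟩
  calc (∏ k, x k) * z ≤ 2 ^ r * (2 * a) := by gcongr; linarith
    _ = 2 ^ (r + 1) * a := by ring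

theorem le_weight_of_mem_box (hr : 1 ≤ r) (hβ : 0 ≤ β) (ha : 1 ≤ a) {xz : (Fin r → ℝ) × ℝ}
    (h : xz ∈ box r a) : a ^ β * log a ^ s / (4 * r) ≤ weight s β xz := by
  obtain ⟨hx, hz, -⟩ := h
  simp only [mem_pi, mem_univ, mem_Icc, forall_const] at hx
  have : Nonempty (Fin r) := ⟨⟨0, hr⟩⟩
  have hprod : 1 ≤ ∏ k, xz.1 k ^ β := Finset.one_le_prod fun k _ => one_le_rpow (hx k).1 hβ
  have hsum : ∑ k, xz.1 k ^ 2 ≤ 4 * r := by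
    simpa [mul_comm] using Finset.sum_le_sum fun k (_ : k ∈ Finset.univ) =>
      (show xz.1 k ^ 2 ≤ 4 by nlinarith [hx k])
  have hinv : (4 * r : ℝ)⁻¹ ≤ invSumSq xz.1 :=
    inv_anti₀ (Finset.sum_pos (fun k _ => by nlinarith [hx k]) Finset.univ_nonempty) hsum
  have := log_nonneg ha
  have := rpow_nonneg (zero_le_one.trans (ha.trans hz)) β
  have := pow_nonneg (log_nonneg (ha.trans hz)) s
  calc a ^ β * log a ^ s / (4 * r) = 1 * a ^ β * log a ^ s * (4 * r : ℝ)⁻¹ := by ring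
    _ ≤ weight s β xz := by
      unfold weight
      gcongr

theorem volume_real_box (ha : 0 ≤ a) : volume.real (box r a) = a := by
  rw [box, Measure.volume_eq_prod, measureReal_prod_prod, measureReal_def, volume_pi_pi]
  norm_num [Real.volume_Icc, two_mul, ha]

theorem le_setIntegral_weight_region (hr : 1 ≤ r) (hβ : 0 ≤ β) (ha : 1 ≤ a) :
    a ^ (β + 1) * log a ^ s / (4 * r) ≤ ∫ xz in region r (2 ^ (r + 1) * a), weight s β xz := by
  have hbox : IsCompact (box r a) := (isCompact_univ_pi fun _ => isCompact_Icc).prod isCompact_Icc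
  calc a ^ (β + 1) * log a ^ s / (4 * r)
      = a ^ β * log a ^ s / (4 * r) * volume.real (box r a) := by
        rw [volume_real_box (by linarith), rpow_add_one (by positivity)]; ring
    _ ≤ ∫ xz in box r a, weight s β xz :=
        setIntegral_ge_of_const_le_real hbox.measurableSet hbox.measure_lt_top.ne
          (fun xz h => le_weight_of_mem_box hr hβ ha h)
          ((integrableOn_weight hr).mono_set (box_subset_region ha))
    _ ≤ ∫ xz in region r (2 ^ (r + 1) * a), weight s β xz :=
        setIntegral_mono_set (integrableOn_weight hr)
          ((ae_restrict_iff' measurableSet_region).2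
            (Filter.Eventually.of_forall fun _ => weight_nonneg_of_mem_region))
          (box_subset_region ha).eventuallyLE

theorem le_setIntegral_weight (hr : 1 ≤ r) (hβ : 0 ≤ β) (hΞ : 4 ^ (r + 1) ≤ Ξ) :
    ((2 ^ (r + 1) : ℝ) ^ (β + 1) * 2 ^ s * (4 * r))⁻¹ * Ξ ^ (β + 1) * log Ξ ^ s ≤
      ∫ xz in region r Ξ, weight s β xz := by
  have hΞ1 : 1 ≤ Ξ := (one_le_pow₀ (by norm_num)).trans hΞ
  set a := Ξ / 2 ^ (r + 1) with ha_def
  have hΞa : Ξ = 2 ^ (r + 1) * a := by rw [ha_def]; field_simp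
  have h4 : (4 : ℝ) ^ (r + 1) = 2 ^ (r + 1) * 2 ^ (r + 1) := by rw [← mul_pow]; norm_num
  have ha : 1 ≤ a := by
    rw [ha_def, le_div_iff₀ (by positivity)]
    nlinarith [one_le_pow₀ (M₀ := ℝ) (a := 2) (by norm_num) (n := r + 1)]
  -- `Ξ ≥ 4^(r+1)` is exactly `a² ≥ Ξ`, i.e. `log a ≥ (log Ξ)/2`.
  have hlog : log Ξ / 2 ≤ log a := by
    have : Ξ ≤ a ^ 2 := by rw [hΞa] at hΞ ⊢; nlinarith
    have := log_le_log (by linarith) this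
    rw [log_pow] at this
    push_cast at this
    linarith
  have hlogΞ : 0 ≤ log Ξ := log_nonneg hΞ1
  calc ((2 ^ (r + 1) : ℝ) ^ (β + 1) * 2 ^ s * (4 * r))⁻¹ * Ξ ^ (β + 1) * log Ξ ^ s
      = a ^ (β + 1) * (log Ξ / 2) ^ s / (4 * r) := by
        rw [ha_def, div_rpow (by linarith) (by positivity), div_pow]
        field_simp
    _ ≤ a ^ (β + 1) * log a ^ s / (4 * r) := by gcongr
    _ ≤ ∫ xz in region r Ξ, weight s β xz := by
        rw [hΞa]
        exact le_setIntegral_weight_region hr hβ ha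

end IntegralLogWeight

open IntegralLogWeight in
theorem integral_log_weight_asymp_general (r s : ℕ) (hr : 1 ≤ r)
    (β : ℝ) (hβ : 0 ≤ β) :
    ∃ c C Ξ₀ : ℝ, 0 < c ∧ c ≤ C ∧ 0 < Ξ₀ ∧ ∀ Ξ : ℝ, Ξ₀ ≤ Ξ →
      c * Ξ ^ (β + 1) * (Real.log Ξ) ^ s ≤
        (∫ xz : (Fin r → ℝ) × ℝ in
          {xz | (∀ k, 1 ≤ xz.1 k) ∧ 1 ≤ xz.2 ∧ (∏ k, xz.1 k) * xz.2 ≤ Ξ},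
          (∏ k, (xz.1 k) ^ β) * xz.2 ^ β * (Real.log xz.2) ^ s *
            (∑ k, (xz.1 k) ^ 2)⁻¹) ∧
      (∫ xz : (Fin r → ℝ) × ℝ in
          {xz | (∀ k, 1 ≤ xz.1 k) ∧ 1 ≤ xz.2 ∧ (∏ k, xz.1 k) * xz.2 ≤ Ξ},
          (∏ k, (xz.1 k) ^ β) * xz.2 ^ β * (Real.log xz.2) ^ s *
            (∑ k, (xz.1 k) ^ 2)⁻¹) ≤
        C * Ξ ^ (β + 1) * (Real.log Ξ) ^ s := by
  set c : ℝ := ((2 ^ (r + 1) : ℝ) ^ (β + 1) * 2 ^ s * (4 * r))⁻¹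
  refine ⟨c, max c ((r / 2 : ℝ) ^ r), 4 ^ (r + 1), by positivity, le_max_left _ _,
    by positivity, fun Ξ hΞ => ?_⟩
  have hΞ1 : 1 ≤ Ξ := (one_le_pow₀ (by norm_num)).trans hΞ
  have := log_nonneg hΞ1
  refine ⟨le_setIntegral_weight hr hβ hΞ, (setIntegral_weight_le hr hβ hΞ1).trans ?_⟩
  gcongr
  exact le_max_right _ _

/-- For `r ≥ 1`, `s ≥ 1`, `β ≥ 0`, `β ≠ 1`, the integral of
`x₁^β⋯x_r^β z^β (log z)^s (x₁²+⋯+x_r²)⁻¹` over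
`{(x,z) ∈ [1,∞)^{r+1} : x₁⋯x_r·z ≤ Ξ}` is `≍ Ξ^{β+1}(log Ξ)^s` as `Ξ → ∞`. -/
theorem integral_log_weight_asymp (r s : ℕ) (hr : 1 ≤ r) (hs : 1 ≤ s)
    (β : ℝ) (hβ : 0 ≤ β) (hβ1 : β ≠ 1) :
    ∃ c C Ξ₀ : ℝ, 0 < c ∧ c ≤ C ∧ 0 < Ξ₀ ∧ ∀ Ξ : ℝ, Ξ₀ ≤ Ξ →
      c * Ξ ^ (β + 1) * (Real.log Ξ) ^ s ≤
        (∫ xz : (Fin r → ℝ) × ℝ in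
          {xz | (∀ k, 1 ≤ xz.1 k) ∧ 1 ≤ xz.2 ∧ (∏ k, xz.1 k) * xz.2 ≤ Ξ},
          (∏ k, (xz.1 k) ^ β) * xz.2 ^ β * (Real.log xz.2) ^ s *
            (∑ k, (xz.1 k) ^ 2)⁻¹) ∧
      (∫ xz : (Fin r → ℝ) × ℝ in
          {xz | (∀ k, 1 ≤ xz.1 k) ∧ 1 ≤ xz.2 ∧ (∏ k, xz.1 k) * xz.2 ≤ Ξ},
          (∏ k, (xz.1 k) ^ β) * xz.2 ^ β * (Real.log xz.2) ^ s *
            (∑ k, (xz.1 k) ^ 2)⁻¹) ≤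
        C * Ξ ^ (β + 1) * (Real.log Ξ) ^ s :=
  integral_log_weight_asymp_general r s hr β hβ
end
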